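/- arXiv:1611.10001 — 5 statements merged into one kernel-verified Lean document; each statement's English description precedes it below -/
import Mathlib

section
/- For every compatible pair (u, v) and every real number a, setting m(a) = inf_{k ≥ 1} (a − 1/λ_k)^2 and M(a) = sup_{k ≥ 1} (a − 1/λ_k)^2 (this supremum is finite since 0 < 1/λ_k ≤ 1/λ_1 for all k ≥ 1), one has (m(a) − a^2)·‖v‖^2 ≤ ‖u − P_0 u‖^2 − 2a·Re⟪u, v⟫ ≤ (M(a) − a^2)·‖v‖^2. -/
/-!
The `E k` form a Hilbert sum, so `‖u - P 0 u‖²`, `Re⟪u, v⟫` and `‖v‖²` are the sums over `k` of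
the corresponding expressions in the components `P k u`, `P k v`. The `k = 0` components vanish,
and for `k ≥ 1`, where `P k v = λ_k P k u`, the `k`-th component of `‖u - P 0 u‖² - 2a Re⟪u, v⟫`
is `((a - 1/λ_k)² - a²) ‖P k v‖²`. Comparing the series termwise gives both bounds.
-/

open RCLike Submodule

section HilbertSum

variable {ι 𝕜 H : Type*} [RCLike 𝕜] [NormedAddCommGroup H] [InnerProductSpace 𝕜 H]
  {E : ι → Submodule 𝕜 H}

theorem OrthogonalFamily.starProjection_eq_zero_of_mem
    (hE : OrthogonalFamily 𝕜 (fun i => E i) fun i => (E i).subtypeₗᵢ) {i j : ι}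
    [(E j).HasOrthogonalProjection] (hij : i ≠ j) {x : H} (hx : x ∈ E i) :
    (E j).starProjection x = 0 :=
  (starProjection_apply_eq_zero_iff _).2 (isOrtho_iff_le.1 (hE.isOrtho hij) hx)

variable [CompleteSpace H] [∀ i, CompleteSpace (E i)]

theorem OrthogonalFamily.hasSum_starProjection
    (hE : OrthogonalFamily 𝕜 (fun i => E i) fun i => (E i).subtypeₗᵢ)
    (hdense : (⨆ i, E i).topologicalClosure = ⊤) (x : H) :
    HasSum (fun i => (E i).starProjection x) x := by
  classical
  have hHS := IsHilbertSum.mkInternal _ hE hdense.ge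
  set w := hHS.linearIsometryEquiv x
  have hw : HasSum (fun i => (w i : H)) x := by
    simpa [w] using hHS.hasSum_linearIsometryEquiv_symm w
  have hcoord : ∀ i, (E i).starProjection x = w i := fun i => by
    refine ((E i).starProjection.hasSum hw).unique ?_
    convert hasSum_ite_eq i (w i : H) using 1
    funext j
    split_ifs with hji
    · subst hji; simp
    · exact hE.starProjection_eq_zero_of_mem hji (w j).2
  simpa only [hcoord] using hw

theorem OrthogonalFamily.hasSum_inner_starProjection
    (hE : OrthogonalFamily 𝕜 (fun i => E i) fun i => (E i).subtypeₗᵢ)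
    (hdense : (⨆ i, E i).topologicalClosure = ⊤) (x y : H) :
    HasSum (fun i => inner 𝕜 ((E i).starProjection x) ((E i).starProjection y)) (inner 𝕜 x y) := by
  have h := (innerSL 𝕜 x).hasSum (hE.hasSum_starProjection hdense y)
  simp_rw [innerSL_apply_apply] at h
  convert h using 2 with i
  rw [inner_starProjection_left_eq_right,
    starProjection_eq_self_iff.2 ((E i).starProjection_apply_mem y)]

theorem OrthogonalFamily.hasSum_norm_sq_starProjection
    (hE : OrthogonalFamily 𝕜 (fun i => E i) fun i => (E i).subtypeₗᵢ)
    (hdense : (⨆ i, E i).topologicalClosure = ⊤) (x : H) :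
    HasSum (fun i => ‖(E i).starProjection x‖ ^ 2) (‖x‖ ^ 2) := by
  simpa only [inner_self_eq_norm_sq] using hasSum_re 𝕜 (hE.hasSum_inner_starProjection hdense x x)

end HilbertSum

theorem norm_sq_sub_two_mul_re_inner_ofReal_smul {𝕜 H : Type*} [RCLike 𝕜]
    [NormedAddCommGroup H] [InnerProductSpace 𝕜 H] (x : H) {r : ℝ} (hr : r ≠ 0) (a : ℝ) :
    ‖x‖ ^ 2 - 2 * a * re (inner 𝕜 x ((r : 𝕜) • x))
      = ((a - 1 / r) ^ 2 - a ^ 2) * ‖(r : 𝕜) • x‖ ^ 2 := by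
  rw [inner_smul_right, re_ofReal_mul, inner_self_eq_norm_sq, norm_smul, norm_ofReal, mul_pow,
    sq_abs]
  field_simp
  ring

theorem sq_sub_one_div_mem_Icc_iInf_iSup {ι : Type*} {f : ι → ℝ} {b : ℝ} (hb : 0 < b)
    (hf : ∀ i, b ≤ f i) (a : ℝ) (i : ι) :
    (a - 1 / f i) ^ 2 ∈ Set.Icc (⨅ j, (a - 1 / f j) ^ 2) (⨆ j, (a - 1 / f j) ^ 2) := by
  have hbdd : BddAbove (Set.range fun j => (a - 1 / f j) ^ 2) := by
    refine ⟨(|a| + 1 / b) ^ 2, ?_⟩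
    rintro _ ⟨j, rfl⟩
    have hpos : 0 < 1 / f j := one_div_pos.2 (hb.trans_le (hf j))
    have hle : 1 / f j ≤ 1 / b := one_div_le_one_div_of_le hb (hf j)
    nlinarith [le_abs_self a, neg_abs_le a]
  exact ⟨ciInf_le ⟨0, by rintro _ ⟨j, rfl⟩; positivity⟩ i, le_ciSup hbdd i⟩

theorem HasSum.mul_le_and_le_mul {ι : Type*} {T S : ι → ℝ} {τ σ lo hi : ℝ} (hT : HasSum T τ)
    (hS : HasSum S σ) (hS0 : ∀ i, 0 ≤ S i) (hTS : ∀ i, ∃ c ∈ Set.Icc lo hi, T i = c * S i) :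
    lo * σ ≤ τ ∧ τ ≤ hi * σ := by
  constructor
  · refine hasSum_le (fun i => ?_) (hS.mul_left lo) hT
    obtain ⟨c, hc, hTc⟩ := hTS i
    exact hTc ▸ mul_le_mul_of_nonneg_right hc.1 (hS0 i)
  · refine hasSum_le (fun i => ?_) hT (hS.mul_left hi)
    obtain ⟨c, hc, hTc⟩ := hTS i
    exact hTc ▸ mul_le_mul_of_nonneg_right hc.2 (hS0 i)

theorem firstEigenvalue_abstract_two_sided_estimate_general
    {H : Type*} [NormedAddCommGroup H] [InnerProductSpace ℂ H] [CompleteSpace H]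
    (E : ℕ → Submodule ℂ H)
    (hEclosed : ∀ k, IsClosed (E k : Set H))
    (hEorth : ∀ j k, j ≠ k → ∀ x ∈ E j, ∀ y ∈ E k, (inner ℂ x y : ℂ) = 0)
    (hEdense : (⨆ k, E k : Submodule ℂ H).topologicalClosure = ⊤)
    (P : ℕ → H →L[ℂ] H)
    (hPmem : ∀ k x, P k x ∈ E k)
    (hPorth : ∀ k x, x - P k x ∈ (E k)ᗮ)
    (lam : ℕ → ℝ)
    (hlampos : ∀ k, 1 ≤ k → 0 < lam k)
    (hlammono : ∀ j k, 1 ≤ j → j < k → lam j < lam k)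
    (u v : H)
    (hcompat0 : P 0 v = 0)
    (hcompat : ∀ k, 1 ≤ k → P k v = ((lam k : ℂ)) • P k u)
    (a : ℝ) :
    ((⨅ k : {k : ℕ // 1 ≤ k}, (a - 1 / lam k)^2) - a^2) * ‖v‖^2
        ≤ ‖u - P 0 u‖^2 - 2 * a * (inner ℂ u v : ℂ).re
      ∧ ‖u - P 0 u‖^2 - 2 * a * (inner ℂ u v : ℂ).re
        ≤ ((⨆ k : {k : ℕ // 1 ≤ k}, (a - 1 / lam k)^2) - a^2) * ‖v‖^2 := by
  have (k : ℕ) : CompleteSpace (E k) := (hEclosed k).completeSpace_coe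
  obtain rfl : P = fun k => (E k).starProjection := funext fun k => ContinuousLinearMap.ext fun x =>
    ((E k).eq_starProjection_of_mem_orthogonal (hPmem k x) (hPorth k x)).symm
  beta_reduce at hcompat0 hcompat
  have hE : OrthogonalFamily ℂ (fun k => E k) fun k => (E k).subtypeₗᵢ :=
    fun j k hjk x y => hEorth j k hjk x x.2 y y.2
  have hlam1 (k : {k : ℕ // 1 ≤ k}) : lam 1 ≤ lam k :=
    k.2.eq_or_lt.elim (fun h => h ▸ le_rfl) fun h => (hlammono 1 k le_rfl h).le
  have hIcc (k : {k : ℕ // 1 ≤ k}) : (a - 1 / lam k) ^ 2 - a ^ 2 ∈ Set.Icc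
      ((⨅ k : {k : ℕ // 1 ≤ k}, (a - 1 / lam k)^2) - a^2)
      ((⨆ k : {k : ℕ // 1 ≤ k}, (a - 1 / lam k)^2) - a^2) :=
    have h := sq_sub_one_div_mem_Icc_iInf_iSup (hlampos 1 le_rfl) hlam1 a k
    ⟨sub_le_sub_right h.1 _, sub_le_sub_right h.2 _⟩
  refine HasSum.mul_le_and_le_mul ((hE.hasSum_norm_sq_starProjection hEdense _).sub
    ((Complex.hasSum_re (hE.hasSum_inner_starProjection hEdense u v)).mul_left (2 * a)))
    (hE.hasSum_norm_sq_starProjection hEdense v) (fun _ => sq_nonneg _) fun k => ?_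
  rcases Nat.eq_zero_or_pos k with rfl | hk
  · -- all three `k = 0` terms vanish, so any factor in the interval will do
    refine ⟨_, hIcc ⟨1, le_rfl⟩, ?_⟩
    simp [hcompat0, starProjection_eq_self_iff.2 ((E 0).starProjection_apply_mem u)]
  · refine ⟨_, hIcc ⟨k, hk⟩, ?_⟩
    have hPk : (E k).starProjection (u - (E 0).starProjection u) = (E k).starProjection u := by
      rw [map_sub, hE.starProjection_eq_zero_of_mem hk.ne ((E 0).starProjection_apply_mem u),
        sub_zero]
    rw [hPk, hcompat k hk]
    exact norm_sq_sub_two_mul_re_inner_ofReal_smul (𝕜 := ℂ) _ (hlampos k hk).ne' a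

/-- Abstract form of Theorem 3.1 of Li–Lin–Son.
`H` is a complex Hilbert space, `E k` a family of mutually orthogonal closed subspaces
with dense algebraic span, `P k` the orthogonal projection onto `E k`, and
`lam k` (for `k ≥ 1`) a strictly increasing sequence of positive reals tending to `∞`.
For every compatible pair `(u, v)` (i.e. `P 0 v = 0` and `P k v = lam k • P k u` for `k ≥ 1`)
and every real `a`, with `m a = ⨅_{k ≥ 1} (a - 1/lam k)^2` and
`M a = ⨆_{k ≥ 1} (a - 1/lam k)^2`, one has
`(m a - a^2)‖v‖² ≤ ‖u - P 0 u‖² - 2a Re⟪u, v⟫ ≤ (M a - a^2)‖v‖²`. -/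
theorem firstEigenvalue_abstract_two_sided_estimate
    {H : Type*} [NormedAddCommGroup H] [InnerProductSpace ℂ H] [CompleteSpace H]
    (E : ℕ → Submodule ℂ H)
    (hEclosed : ∀ k, IsClosed (E k : Set H))
    (hEorth : ∀ j k, j ≠ k → ∀ x ∈ E j, ∀ y ∈ E k, (inner ℂ x y : ℂ) = 0)
    (hEdense : (⨆ k, E k : Submodule ℂ H).topologicalClosure = ⊤)
    (P : ℕ → H →L[ℂ] H)
    (hPmem : ∀ k x, P k x ∈ E k)
    (hPorth : ∀ k x, x - P k x ∈ (E k)ᗮ)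
    (lam : ℕ → ℝ)
    (hlampos : ∀ k, 1 ≤ k → 0 < lam k)
    (hlammono : ∀ j k, 1 ≤ j → j < k → lam j < lam k)
    (hlamtop : Filter.Tendsto lam Filter.atTop Filter.atTop)
    (u v : H)
    (hcompat0 : P 0 v = 0)
    (hcompat : ∀ k, 1 ≤ k → P k v = ((lam k : ℂ)) • P k u)
    (a : ℝ) :
    ((⨅ k : {k : ℕ // 1 ≤ k}, (a - 1 / lam k)^2) - a^2) * ‖v‖^2
        ≤ ‖u - P 0 u‖^2 - 2 * a * (inner ℂ u v : ℂ).re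
      ∧ ‖u - P 0 u‖^2 - 2 * a * (inner ℂ u v : ℂ).re
        ≤ ((⨆ k : {k : ℕ // 1 ≤ k}, (a - 1 / lam k)^2) - a^2) * ‖v‖^2 :=
  firstEigenvalue_abstract_two_sided_estimate_general E hEclosed hEorth hEdense P hPmem hPorth lam
    hlampos hlammono u v hcompat0 hcompat a
end

section
/- Let (u, v) be a compatible pair with Re⟪u, v⟫ = 1 (so in particular v ≠ 0). Then for every k ≥ 1, (‖v‖^2/λ_k − 1)·(‖v‖^2/λ_{k+1} − 1) ≥ 1 − ‖u − P_0 u‖^2 · ‖v‖^2. -/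
/-!
Put `w = u - P₀ u`. The `i`-th components of `v - λₖ w` and `v - λₖ₊₁ w` are `(λᵢ - λₖ) Pᵢ u` and
`(λᵢ - λₖ₊₁) Pᵢ u`, and no `λᵢ` lies strictly between `λₖ` and `λₖ₊₁`, so by Parseval
`Re⟪v - λₖ w, v - λₖ₊₁ w⟫ ≥ 0`. Expanding with `Re⟪w, v⟫ = 1` gives
`‖v‖² - λₖ - λₖ₊₁ + λₖ λₖ₊₁ ‖w‖² ≥ 0`, which is the claim multiplied by `λₖ λₖ₊₁ / ‖v‖²`.
-/

open scoped InnerProductSpace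

namespace Submodule

variable {𝕜 E : Type*} [RCLike 𝕜] [NormedAddCommGroup E] [InnerProductSpace 𝕜 E]

theorem isClosed_of_hasOrthogonalProjection (K : Submodule 𝕜 E) [K.HasOrthogonalProjection] :
    IsClosed (K : Set E) := by
  rw [← K.orthogonal_orthogonal]
  exact Kᗮ.isClosed_orthogonal

end Submodule

namespace OrthogonalFamily

variable {𝕜 E ι : Type*} [RCLike 𝕜] [NormedAddCommGroup E] [InnerProductSpace 𝕜 E]
  [CompleteSpace E] {V : ι → Submodule 𝕜 E} [∀ i, (V i).HasOrthogonalProjection]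

theorem hasSum_starProjection_s4 (hV : OrthogonalFamily 𝕜 (fun i => V i) fun i => (V i).subtypeₗᵢ)
    (hdense : (⨆ i, V i).topologicalClosure = ⊤) (x : E) :
    HasSum (fun i => (V i).starProjection x) x := by
  classical
  have : ∀ i, CompleteSpace (V i) := fun i =>
    (V i).isClosed_of_hasOrthogonalProjection.completeSpace_coe
  have hH := IsHilbertSum.mkInternal _ hV hdense.ge
  set f := hH.linearIsometryEquiv x
  have hf : HasSum (fun i => (f i : E)) x := by
    simpa [f] using hH.hasSum_linearIsometryEquiv_symm f
  have hcomp (i j : ι) : (V j).starProjection (f i) = if i = j then (f j : E) else 0 := by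
    split_ifs with hij
    · subst hij
      exact (V i).starProjection_eq_self_iff.mpr (f i).2
    · exact (V j).starProjection_apply_eq_zero_iff.mpr (hV.isOrtho hij (f i).2)
  convert hf using 1
  funext j
  exact (hf.mapL (V j).starProjection).unique (by simpa only [hcomp] using hasSum_ite_eq j _)

theorem hasSum_inner_starProjection_s4
    (hV : OrthogonalFamily 𝕜 (fun i => V i) fun i => (V i).subtypeₗᵢ)
    (hdense : (⨆ i, V i).topologicalClosure = ⊤) (x y : E) :
    HasSum (fun i => ⟪(V i).starProjection x, (V i).starProjection y⟫_𝕜) ⟪x, y⟫_𝕜 := by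
  have hidem (i : ι) : (V i).starProjection ((V i).starProjection y) = (V i).starProjection y :=
    (V i).starProjection_eq_self_iff.mpr ((V i).starProjection_apply_mem y)
  simpa only [innerSL_apply_apply, Submodule.inner_starProjection_left_eq_right, hidem] using
    (hV.hasSum_starProjection_s4 hdense y).mapL (innerSL 𝕜 x)

end OrthogonalFamily

section InnerSubSmul

variable {𝕜 E ι : Type*} [RCLike 𝕜] [NormedAddCommGroup E] [InnerProductSpace 𝕜 E]

theorem re_inner_sub_smul_sub_smul (v w : E) (a b : ℝ) :
    RCLike.re ⟪v - (a : 𝕜) • w, v - (b : 𝕜) • w⟫_𝕜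
      = ‖v‖ ^ 2 - (a + b) * RCLike.re ⟪w, v⟫_𝕜 + a * b * ‖w‖ ^ 2 := by
  simp only [inner_sub_left, inner_sub_right, inner_smul_left, inner_smul_right, map_sub,
    RCLike.conj_ofReal, RCLike.re_ofReal_mul, inner_self_eq_norm_sq, inner_re_symm (𝕜 := 𝕜) v w]
  ring

theorem re_inner_ofReal_smul_ofReal_smul (z : E) (a b : ℝ) :
    RCLike.re ⟪(a : 𝕜) • z, (b : 𝕜) • z⟫_𝕜 = a * b * ‖z‖ ^ 2 := by
  rw [inner_smul_left, inner_smul_right, RCLike.conj_ofReal, ← mul_assoc, ← RCLike.ofReal_mul,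
    RCLike.re_ofReal_mul, inner_self_eq_norm_sq]

variable [CompleteSpace E] {V : ι → Submodule 𝕜 E} [∀ i, (V i).HasOrthogonalProjection]

theorem OrthogonalFamily.hasSum_re_inner_sub_smul_sub_smul
    (hV : OrthogonalFamily 𝕜 (fun i => V i) fun i => (V i).subtypeₗᵢ)
    (hdense : (⨆ i, V i).topologicalClosure = ⊤) {v w : E} {c : ι → ℝ}
    (hvw : ∀ i, (V i).starProjection v = (c i : 𝕜) • (V i).starProjection w) (a b : ℝ) :
    HasSum (fun i => (c i - a) * (c i - b) * ‖(V i).starProjection w‖ ^ 2)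
      (RCLike.re ⟪v - (a : 𝕜) • w, v - (b : 𝕜) • w⟫_𝕜) := by
  have hcomp (i : ι) (d : ℝ) :
      (V i).starProjection (v - (d : 𝕜) • w) = ((c i - d : ℝ) : 𝕜) • (V i).starProjection w := by
    rw [map_sub, map_smul, hvw, RCLike.ofReal_sub, sub_smul]
  simpa only [hcomp, re_inner_ofReal_smul_ofReal_smul] using
    RCLike.hasSum_re 𝕜 (hV.hasSum_inner_starProjection_s4 hdense (v - (a : 𝕜) • w) (v - (b : 𝕜) • w))

end InnerSubSmul

theorem MonotoneOn.mul_sub_sub_succ_nonneg {f : ℕ → ℝ} (hf : MonotoneOn f (Set.Ici 1))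
    {i k : ℕ} (hi : 1 ≤ i) (hk : 1 ≤ k) : 0 ≤ (f i - f k) * (f i - f (k + 1)) := by
  have mem {n : ℕ} (hn : 1 ≤ n) : n ∈ Set.Ici 1 := hn
  rcases le_or_gt i k with hik | hki
  · exact mul_nonneg_of_nonpos_of_nonpos (sub_nonpos.mpr (hf (mem hi) (mem hk) hik))
      (sub_nonpos.mpr (hf (mem hi) (mem (by omega)) (by omega)))
  · exact mul_nonneg (sub_nonneg.mpr (hf (mem hk) (mem hi) hki.le))
      (sub_nonneg.mpr (hf (mem (by omega)) (mem hi) hki))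

theorem one_sub_mul_le_div_sub_one_mul_div_sub_one {s t μ ν : ℝ} (hs : 0 ≤ s) (hμ : 0 < μ)
    (hν : 0 < ν) (h : 0 ≤ s - μ - ν + μ * ν * t) :
    1 - t * s ≤ (s / μ - 1) * (s / ν - 1) := by
  have key : (s / μ - 1) * (s / ν - 1) - (1 - t * s) = s * (s - μ - ν + μ * ν * t) / (μ * ν) := by
    field_simp
    ring
  have : 0 ≤ s * (s - μ - ν + μ * ν * t) / (μ * ν) := by positivity
  linarith

theorem compatible_pair_consecutive_eigenvalue_inequality_general
    {H : Type*} [NormedAddCommGroup H] [InnerProductSpace ℂ H] [CompleteSpace H]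
    (E : ℕ → Submodule ℂ H)
    (hEorth : ∀ j k, j ≠ k → ∀ x ∈ E j, ∀ y ∈ E k, (inner ℂ x y : ℂ) = 0)
    (hEdense : (⨆ k, E k : Submodule ℂ H).topologicalClosure = ⊤)
    (P : ℕ → H →L[ℂ] H)
    (hPmem : ∀ k x, P k x ∈ E k)
    (hPorth : ∀ k x, x - P k x ∈ (E k)ᗮ)
    (lam : ℕ → ℝ)
    (hlampos : ∀ k, 1 ≤ k → 0 < lam k)
    (hlammono : ∀ j k, 1 ≤ j → j < k → lam j < lam k)
    (u v : H)
    (hcompat0 : P 0 v = 0)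
    (hcompat : ∀ k, 1 ≤ k → P k v = ((lam k : ℂ)) • P k u)
    (hnorm : (inner ℂ u v : ℂ).re = 1) :
    ∀ k, 1 ≤ k →
      (‖v‖^2 / lam k - 1) * (‖v‖^2 / lam (k+1) - 1) ≥ 1 - ‖u - P 0 u‖^2 * ‖v‖^2 := by
  intro k hk
  have : ∀ i, (E i).HasOrthogonalProjection := fun i => ⟨fun x => ⟨P i x, hPmem i x, hPorth i x⟩⟩
  obtain rfl : P = fun i => (E i).starProjection := funext fun i => ContinuousLinearMap.ext
    fun x => ((E i).eq_starProjection_of_mem_orthogonal (hPmem i x) (hPorth i x)).symm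
  have hE : OrthogonalFamily ℂ (fun i => E i) fun i => (E i).subtypeₗᵢ :=
    fun i j hij x y => hEorth i j hij x x.2 y y.2
  set w := u - (E 0).starProjection u
  have hw0 : (E 0).starProjection w = 0 :=
    (E 0).starProjection_apply_eq_zero_iff.mpr ((E 0).sub_starProjection_mem_orthogonal u)
  have hvw (i : ℕ) : (E i).starProjection v = (lam i : ℂ) • (E i).starProjection w := by
    rcases Nat.eq_zero_or_pos i with rfl | hi
    · rw [hcompat0, hw0, smul_zero]
    · rw [hcompat i hi, map_sub, (E i).starProjection_apply_eq_zero_iff.mpr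
        (hE.isOrtho hi.ne ((E 0).starProjection_apply_mem u)), sub_zero]
  have hwv : RCLike.re ⟪w, v⟫_ℂ = 1 := by
    rwa [inner_sub_left, Submodule.inner_starProjection_left_eq_right, hcompat0,
      inner_zero_right, sub_zero]
  have hterm (i : ℕ) :
      0 ≤ (lam i - lam k) * (lam i - lam (k + 1)) * ‖(E i).starProjection w‖ ^ 2 := by
    rcases Nat.eq_zero_or_pos i with rfl | hi
    · simp [hw0]
    · exact mul_nonneg ((StrictMonoOn.monotoneOn fun i hi j _ hij => hlammono i j hi hij)
        |>.mul_sub_sub_succ_nonneg hi hk) (sq_nonneg _)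
  have hgap := (hE.hasSum_re_inner_sub_smul_sub_smul hEdense hvw (lam k) (lam (k + 1))).nonneg hterm
  rw [re_inner_sub_smul_sub_smul, hwv] at hgap
  exact one_sub_mul_le_div_sub_one_mul_div_sub_one (sq_nonneg _) (hlampos k hk)
    (hlampos (k + 1) (by omega)) (by linarith)

/-- Abstract form of the key intermediate inequality (3.26)-type in the
proof of Corollary 3.3 of Li–Lin–Son: if `(u, v)` is a compatible pair normalized so that
`Re⟪u, v⟫ = 1`, then for every `k ≥ 1`,
`(‖v‖²/lam k - 1)(‖v‖²/lam (k+1) - 1) ≥ 1 - ‖u - P 0 u‖² ⬝ ‖v‖²`. -/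
theorem compatible_pair_consecutive_eigenvalue_inequality
    {H : Type*} [NormedAddCommGroup H] [InnerProductSpace ℂ H] [CompleteSpace H]
    (E : ℕ → Submodule ℂ H)
    (hEclosed : ∀ k, IsClosed (E k : Set H))
    (hEorth : ∀ j k, j ≠ k → ∀ x ∈ E j, ∀ y ∈ E k, (inner ℂ x y : ℂ) = 0)
    (hEdense : (⨆ k, E k : Submodule ℂ H).topologicalClosure = ⊤)
    (P : ℕ → H →L[ℂ] H)
    (hPmem : ∀ k x, P k x ∈ E k)
    (hPorth : ∀ k x, x - P k x ∈ (E k)ᗮ)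
    (lam : ℕ → ℝ)
    (hlampos : ∀ k, 1 ≤ k → 0 < lam k)
    (hlammono : ∀ j k, 1 ≤ j → j < k → lam j < lam k)
    (hlamtop : Filter.Tendsto lam Filter.atTop Filter.atTop)
    (u v : H)
    (hcompat0 : P 0 v = 0)
    (hcompat : ∀ k, 1 ≤ k → P k v = ((lam k : ℂ)) • P k u)
    (hnorm : (inner ℂ u v : ℂ).re = 1) :
    ∀ k, 1 ≤ k →
      (‖v‖^2 / lam k - 1) * (‖v‖^2 / lam (k+1) - 1) ≥ 1 - ‖u - P 0 u‖^2 * ‖v‖^2 :=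
  compatible_pair_consecutive_eigenvalue_inequality_general E hEorth hEdense P hPmem hPorth lam
    hlampos hlammono u v hcompat0 hcompat hnorm
end

section
/- Let n ≥ 1, let H be an (n+1) × (n+1) complex Hermitian positive-definite matrix (indices 1, …, n+1) and let r ∈ ℂ^{n+1} be a vector with r_{n+1} ≠ 0. Let G = H⁻¹, and define ρ^{j k̄} := G_{k j}, ρ^j := Σ_{k=1}^{n+1} conj(r_k) · ρ^{j k̄}, and |∂r|^2 := Σ_{j,k=1}^{n+1} ρ^{j k̄} · r_j · conj(r_k) (a positive real number since H is positive definite and r ≠ 0). For α, β ∈ {1, …, n} define the Levi matrix L_{α β} := H_{α β} − r_α · H_{(n+1) β} / r_{n+1} − conj(r_β) · H_{α (n+1)} / conj(r_{n+1}) + H_{(n+1)(n+1)} · r_α · conj(r_β) / |r_{n+1}|^2, and define K_{γ β} := ρ^{γ β̄} − ρ^γ · conj(ρ^β) / |∂r|^2, where ρ^{γ β̄} = G_{β γ}. Then Σ_{β=1}^n K_{γ β} · L_{α β} = δ_{γ α} for all α, γ ∈ {1, …, n}; that is, [K] is the inverse of the Levi matrix [L] in the Hermitian pairing. -/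
/-!
Write `G = H⁻¹` and `w = G r`. The rows of the frame `U` (`u_α = e_α - (r_α / r_{n+1}) e_{n+1}`)
span `ker r`, and `L = U H Uᴴ`. The transpose `Kᵀ` is the compression `Vᴴ M V` of
`M = G - w wᴴ / (rᴴ w)` by the coordinate inclusion `V`, for which `U V = 1` and `V U` differs from
`1` by a rank-one matrix with column space `ℂ r`. Since `rᴴ M = 0`, that rank-one error is
invisible, so `L Kᵀ = U H M V`; and `H M = 1 - r wᴴ / (rᴴ w)` with `U r = 0`, so `L Kᵀ = U V = 1`.
-/

open ComplexOrder Matrix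

namespace Matrix

section ConstrainedInv

variable {m ι K : Type*} [Fintype ι] [Field K] [StarRing K]

/-- Up to transposition, the paper's `ρ^{j k̄} - ρ^j ρ^{k̄} / |∂ρ|²` for `G = H⁻¹`, `r = ∂ρ`. -/
def constrainedInv (G : Matrix ι ι K) (r : ι → K) : Matrix ι ι K :=
  G - (star r ⬝ᵥ G *ᵥ r)⁻¹ • vecMulVec (G *ᵥ r) (star (G *ᵥ r))

variable {G : Matrix ι ι K} {r : ι → K}

theorem star_vecMul_constrainedInv (hG : Gᴴ = G) (hr : star r ⬝ᵥ G *ᵥ r ≠ 0) :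
    star r ᵥ* constrainedInv G r = 0 := by
  have hw : star (G *ᵥ r) = star r ᵥ* G := by rw [star_mulVec, hG]
  rw [constrainedInv, vecMul_sub, vecMul_smul, vecMul_vecMulVec, smul_smul, inv_mul_cancel₀ hr,
    one_smul, hw, sub_self]

theorem mul_constrainedInv [DecidableEq ι] {H : Matrix ι ι K} (hHG : H * G = 1) :
    H * constrainedInv G r = 1 - (star r ⬝ᵥ G *ᵥ r)⁻¹ • vecMulVec r (star (G *ᵥ r)) := by
  rw [constrainedInv, Matrix.mul_sub, Matrix.mul_smul, mul_vecMulVec, mulVec_mulVec, hHG,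
    one_mulVec]

theorem mul_mul_conjTranspose_mul_constrainedInv [DecidableEq ι] [Fintype m] [DecidableEq m]
    {H : Matrix ι ι K} (hHG : H * G = 1) (hG : Gᴴ = G) (hr : star r ⬝ᵥ G *ᵥ r ≠ 0)
    {U : Matrix m ι K} {V : Matrix ι m K} {ℓ : ι → K} (hUV : U * V = 1) (hUr : U *ᵥ r = 0)
    (hVU : V * U = 1 - vecMulVec r ℓ) :
    U * H * Uᴴ * (Vᴴ * constrainedInv G r * V) = 1 := by
  have hproj : (V * U)ᴴ * constrainedInv G r = constrainedInv G r := by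
    rw [hVU, conjTranspose_sub, conjTranspose_one, conjTranspose_vecMulVec, Matrix.sub_mul,
      vecMulVec_mul, star_vecMul_constrainedInv hG hr, vecMulVec_zero, Matrix.one_mul, sub_zero]
  calc U * H * Uᴴ * (Vᴴ * constrainedInv G r * V)
      = U * (H * ((V * U)ᴴ * constrainedInv G r)) * V := by
        rw [conjTranspose_mul]; simp only [Matrix.mul_assoc]
    _ = U * (H * constrainedInv G r) * V := by rw [hproj]
    _ = 1 := by
        rw [mul_constrainedInv hHG, Matrix.mul_sub, Matrix.mul_smul, mul_vecMulVec, hUr,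
          zero_vecMulVec, smul_zero, sub_zero, Matrix.mul_one, hUV]

end ConstrainedInv

section LeviFrame

def castSuccIncl (K : Type*) [Zero K] [One K] (n : ℕ) : Matrix (Fin (n + 1)) (Fin n) K :=
  (1 : Matrix (Fin (n + 1)) (Fin (n + 1)) K).submatrix id Fin.castSucc

variable {n : ℕ} {K : Type*} [Field K]

/-- Row `α` is the tangent vector `∂_α - (ρ_α / ρ_{n+1}) ∂_{n+1}` dual to the coframe `θ^α`. -/
def leviFrame (r : Fin (n + 1) → K) : Matrix (Fin n) (Fin (n + 1)) K :=
  of fun α => Pi.single α.castSucc 1 - (r α.castSucc / r (Fin.last n)) • Pi.single (Fin.last n) 1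

theorem leviFrame_mul_castSuccIncl (r : Fin (n + 1) → K) :
    leviFrame r * castSuccIncl K n = 1 := by
  ext α β
  simp [leviFrame, castSuccIncl, mul_apply, one_apply, Pi.single_apply, Fin.castSucc_ne_last,
    eq_comm]

theorem leviFrame_mulVec_self {r : Fin (n + 1) → K} (hr : r (Fin.last n) ≠ 0) :
    leviFrame r *ᵥ r = 0 := by
  ext α
  simp [leviFrame, mulVec, dotProduct, Pi.single_apply, sub_mul, ite_mul, Finset.sum_sub_distrib, hr]

theorem castSuccIncl_mul_leviFrame {r : Fin (n + 1) → K} (hr : r (Fin.last n) ≠ 0) :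
    castSuccIncl K n * leviFrame r =
      1 - vecMulVec r (Pi.single (Fin.last n) (r (Fin.last n))⁻¹) := by
  ext i j
  induction i using Fin.lastCases <;> induction j using Fin.lastCases <;>
    simp [leviFrame, castSuccIncl, mul_apply, one_apply, Pi.single_apply, Fin.castSucc_ne_last,
      (Fin.castSucc_ne_last _).symm, hr, vecMulVec_apply, div_eq_mul_inv]

theorem conjTranspose_castSuccIncl_mul_mul [StarRing K] (A : Matrix (Fin (n + 1)) (Fin (n + 1)) K) :
    (castSuccIncl K n)ᴴ * A * castSuccIncl K n = A.submatrix Fin.castSucc Fin.castSucc := by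
  ext α β
  simp [castSuccIncl, mul_apply, one_apply]

theorem leviFrame_mul_mul_conjTranspose_apply [StarRing K] (r : Fin (n + 1) → K)
    (A : Matrix (Fin (n + 1)) (Fin (n + 1)) K) (α β : Fin n) :
    (leviFrame r * A * (leviFrame r)ᴴ) α β = A α.castSucc β.castSucc
      - r α.castSucc * A (Fin.last n) β.castSucc / r (Fin.last n)
      - star (r β.castSucc) * A α.castSucc (Fin.last n) / star (r (Fin.last n))
      + A (Fin.last n) (Fin.last n) * r α.castSucc * star (r β.castSucc)
        / (r (Fin.last n) * star (r (Fin.last n))) := by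
  simp [leviFrame, mul_apply, Pi.single_apply, sub_mul, mul_sub, Finset.sum_sub_distrib,
    apply_ite star]
  ring

end LeviFrame

end Matrix

theorem levi_matrix_inverse_formula_general
    {n : ℕ}
    (Hm : Matrix (Fin (n+1)) (Fin (n+1)) ℂ)
    (hHpd : Hm.PosDef)
    (r : Fin (n+1) → ℂ) (hr : r (Fin.last n) ≠ 0)
    (G : Matrix (Fin (n+1)) (Fin (n+1)) ℂ) (hG : G = Hm⁻¹)
    (ρup : Fin (n+1) → Fin (n+1) → ℂ) (hρup : ∀ j k, ρup j k = G k j)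
    (ρv : Fin (n+1) → ℂ)
    (hρv : ∀ j, ρv j = ∑ k, (starRingEnd ℂ) (r k) * ρup j k)
    (nr : ℂ)
    (hnr : nr = ∑ j, ∑ k, ρup j k * r j * (starRingEnd ℂ) (r k))
    (L : Matrix (Fin n) (Fin n) ℂ)
    (hL : ∀ α β, L α β = Hm α.castSucc β.castSucc
        - r α.castSucc * Hm (Fin.last n) β.castSucc / r (Fin.last n)
        - (starRingEnd ℂ) (r β.castSucc) * Hm α.castSucc (Fin.last n)
            / (starRingEnd ℂ) (r (Fin.last n))
        + Hm (Fin.last n) (Fin.last n) * r α.castSucc * (starRingEnd ℂ) (r β.castSucc)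
            / (Complex.normSq (r (Fin.last n)) : ℂ))
    (K : Matrix (Fin n) (Fin n) ℂ)
    (hK : ∀ γ β, K γ β = ρup γ.castSucc β.castSucc
        - ρv γ.castSucc * (starRingEnd ℂ) (ρv β.castSucc) / nr) :
    ∀ α γ : Fin n, ∑ β, K γ β * L α β = if γ = α then 1 else 0 := by
  subst hG
  have hGpd : Hm⁻¹.PosDef := hHpd.inv
  have hρv_eq : ρv = star (Hm⁻¹ *ᵥ r) := by
    ext j
    simp only [hρv, hρup, starRingEnd_apply, Pi.star_apply, mulVec, dotProduct, star_sum,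
      star_mul', hGpd.isHermitian.apply, mul_comm]
  have hnr_eq : nr = star r ⬝ᵥ Hm⁻¹ *ᵥ r := by
    simp only [hnr, hρup, starRingEnd_apply, Pi.star_apply, mulVec, dotProduct, Finset.mul_sum]
    rw [Finset.sum_comm]
    simp only [mul_comm]
  have hnr_ne : star r ⬝ᵥ Hm⁻¹ *ᵥ r ≠ 0 :=
    (hGpd.dotProduct_mulVec_pos fun h => hr (by simp [h])).ne'
  have hL_eq : L = leviFrame r * Hm * (leviFrame r)ᴴ := by
    ext α β
    rw [hL, leviFrame_mul_mul_conjTranspose_apply, ← Complex.mul_conj]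
    rfl
  have hK_eq : Kᵀ = (castSuccIncl ℂ n)ᴴ * constrainedInv Hm⁻¹ r * castSuccIncl ℂ n := by
    rw [conjTranspose_castSuccIncl_mul_mul]
    ext β γ
    simp [hK, hρup, hρv_eq, hnr_eq, constrainedInv, vecMulVec_apply]
    ring
  have hinv : Hm * Hm⁻¹ = 1 := Hm.mul_nonsing_inv (Hm.isUnit_iff_isUnit_det.mp hHpd.isUnit)
  have key := mul_mul_conjTranspose_mul_constrainedInv hinv hGpd.isHermitian hnr_ne
    (leviFrame_mul_castSuccIncl r) (leviFrame_mulVec_self hr) (castSuccIncl_mul_leviFrame hr)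
  rw [← hL_eq, ← hK_eq] at key
  intro α γ
  simpa [mul_apply, one_apply, mul_comm, eq_comm] using congrFun (congrFun key α) γ

/-- The algebraic identity verified in Section 2 of Li–Lin–Son:
for a positive definite Hermitian `(n+1) × (n+1)` matrix `Hm` (the complex Hessian
`[ρ_{j k̄}]`) and a vector `r` (the gradient `(ρ_1, …, ρ_{n+1})`) with `r_{n+1} ≠ 0`,
the matrix `K_{γ β} = ρ^{γ β̄} - ρ^γ conj(ρ^β)/|∂r|²` is the inverse of the Levi matrix
`L_{α β}` in the Hermitian pairing: `Σ_β K_{γ β} L_{α β} = δ_{γ α}`. -/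
theorem levi_matrix_inverse_formula
    {n : ℕ} (hn : 1 ≤ n)
    (Hm : Matrix (Fin (n+1)) (Fin (n+1)) ℂ)
    (hHherm : Hm.IsHermitian) (hHpd : Hm.PosDef)
    (r : Fin (n+1) → ℂ) (hr : r (Fin.last n) ≠ 0)
    (G : Matrix (Fin (n+1)) (Fin (n+1)) ℂ) (hG : G = Hm⁻¹)
    (ρup : Fin (n+1) → Fin (n+1) → ℂ) (hρup : ∀ j k, ρup j k = G k j)
    (ρv : Fin (n+1) → ℂ)
    (hρv : ∀ j, ρv j = ∑ k, (starRingEnd ℂ) (r k) * ρup j k)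
    (nr : ℂ)
    (hnr : nr = ∑ j, ∑ k, ρup j k * r j * (starRingEnd ℂ) (r k))
    (L : Matrix (Fin n) (Fin n) ℂ)
    (hL : ∀ α β, L α β = Hm α.castSucc β.castSucc
        - r α.castSucc * Hm (Fin.last n) β.castSucc / r (Fin.last n)
        - (starRingEnd ℂ) (r β.castSucc) * Hm α.castSucc (Fin.last n)
            / (starRingEnd ℂ) (r (Fin.last n))
        + Hm (Fin.last n) (Fin.last n) * r α.castSucc * (starRingEnd ℂ) (r β.castSucc)
            / (Complex.normSq (r (Fin.last n)) : ℂ))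
    (K : Matrix (Fin n) (Fin n) ℂ)
    (hK : ∀ γ β, K γ β = ρup γ.castSucc β.castSucc
        - ρv γ.castSucc * (starRingEnd ℂ) (ρv β.castSucc) / nr) :
    ∀ α γ : Fin n, ∑ β, K γ β * L α β = if γ = α then 1 else 0 :=
  levi_matrix_inverse_formula_general Hm hHpd r hr G hG ρup hρup ρv hρv nr hnr L hL K hK
end

section
/- Let U ⊆ ℂ^{n+1} be open and let ρ : U → ℝ and f : U → ℂ be twice continuously differentiable (C²) on U. For 1 ≤ p, q ≤ n+1 define the first-order operators X_{pq} g := ρ_q · ∂_p g − ρ_p · ∂_q g and X_{p̄ q̄} g := ρ_{q̄} · ∂_{p̄} g − ρ_{p̄} · ∂_{q̄} g (acting on C¹ functions g on U). Fix z ∈ U at which the Hermitian matrix H(z) = [ρ_{j k̄}(z)] is invertible and |∂ρ(z)|_ρ^2 ≠ 0. Then at the point z: Σ_{p,q,j,k=1}^{n+1} ρ^{p k̄} · ρ^{q j̄} · X_{pq}(X_{j̄ k̄} f) = 2 · Σ_{j,k=1}^{n+1} ( ρ^k · ρ^{j̄} − |∂ρ|_ρ^2 · ρ^{k j̄} ) ·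 ∂_k ∂_{j̄} f + 2n · Σ_{j=1}^{n+1} ρ^{j̄} · ∂_{j̄} f. -/
/-- The Wirtinger derivative `∂_j g(z) = (1/2)(Dg(z)(e_j) - i·Dg(z)(i·e_j))` of a
real-differentiable function `g : ℂ^m → ℂ`, where `D` is the real Fréchet derivative
and `e_j` the `j`-th standard basis vector. -/
noncomputable def wirtingerDeriv {m : ℕ} (g : (Fin m → ℂ) → ℂ) (j : Fin m)
    (z : Fin m → ℂ) : ℂ :=
  (1/2) * (fderiv ℝ g z (Pi.single j 1) - Complex.I * fderiv ℝ g z (Pi.single j Complex.I))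

/-- The conjugate Wirtinger derivative `∂_j̄ g(z) = (1/2)(Dg(z)(e_j) + i·Dg(z)(i·e_j))`. -/
noncomputable def wirtingerDerivBar {m : ℕ} (g : (Fin m → ℂ) → ℂ) (j : Fin m)
    (z : Fin m → ℂ) : ℂ :=
  (1/2) * (fderiv ℝ g z (Pi.single j 1) + Complex.I * fderiv ℝ g z (Pi.single j Complex.I))

/-!
Since `X_{j̄ k̄} f` is antisymmetric in `(j, k)`, relabelling `p ↔ q, j ↔ k` shows that the
two halves of `X_{pq}` contribute equally, and `Σ_q ρ^{q j̄} ρ_q = ρ^{j̄}` because `H` is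
Hermitian (`ρ` is real and its mixed second derivatives commute). The Leibniz rule then splits `∂_p X_{j̄ k̄} f` into four
terms; contracting them with `ρ^{p k̄}` via `H⁻¹ H = 1` produces `(n + 1) - 1 = n` copies of
`ρ^{j̄} ∂_{j̄} f` (a trace and a Kronecker delta) and the two second-order terms.
-/

open Complex ComplexConjugate Matrix

section Wirtinger

variable {m : ℕ} {f g h : (Fin m → ℂ) → ℂ} {z : Fin m → ℂ}

theorem fderiv_conj_apply (g : (Fin m → ℂ) → ℂ) (z v : Fin m → ℂ) :
    fderiv ℝ (fun w => conj (g w)) z v = conj (fderiv ℝ g z v) :=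
  congrArg (· v) (conjCLE.comp_fderiv (f := g))

theorem wirtingerDeriv_conj (g : (Fin m → ℂ) → ℂ) (j : Fin m) (z : Fin m → ℂ) :
    wirtingerDeriv (fun w => conj (g w)) j z = conj (wirtingerDerivBar g j z) := by
  simp [wirtingerDeriv, wirtingerDerivBar, fderiv_conj_apply, map_ofNat, sub_eq_add_neg]

theorem wirtingerDerivBar_conj (g : (Fin m → ℂ) → ℂ) (j : Fin m) (z : Fin m → ℂ) :
    wirtingerDerivBar (fun w => conj (g w)) j z = conj (wirtingerDeriv g j z) := by
  simp [wirtingerDeriv, wirtingerDerivBar, fderiv_conj_apply, sub_eq_add_neg, map_ofNat]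

theorem ContDiffAt.differentiableAt_fderiv (hg : ContDiffAt ℝ 2 g z) :
    DifferentiableAt ℝ (fderiv ℝ g) z :=
  (hg.fderiv_right (m := 1) le_rfl).differentiableAt one_ne_zero

theorem fderiv_fderiv_apply (hg : DifferentiableAt ℝ (fderiv ℝ g) z) (u v : Fin m → ℂ) :
    fderiv ℝ (fun w => fderiv ℝ g w v) z u = fderiv ℝ (fderiv ℝ g) z u v := by
  simp [fderiv_clm_apply hg (differentiableAt_const v)]

theorem fderiv_wirtingerDerivBar_apply (hg : DifferentiableAt ℝ (fderiv ℝ g) z) (j : Fin m)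
    (v : Fin m → ℂ) :
    fderiv ℝ (wirtingerDerivBar g j) z v = (1/2) * (fderiv ℝ (fderiv ℝ g) z v (Pi.single j 1)
      + I * fderiv ℝ (fderiv ℝ g) z v (Pi.single j I)) := by
  unfold wirtingerDerivBar
  rw [fderiv_const_mul (by fun_prop), fderiv_fun_add (by fun_prop) (by fun_prop),
    fderiv_const_mul (by fun_prop)]
  simp [fderiv_fderiv_apply hg, mul_add]

theorem fderiv_wirtingerDeriv_apply (hg : DifferentiableAt ℝ (fderiv ℝ g) z) (j : Fin m)
    (v : Fin m → ℂ) :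
    fderiv ℝ (wirtingerDeriv g j) z v = (1/2) * (fderiv ℝ (fderiv ℝ g) z v (Pi.single j 1)
      - I * fderiv ℝ (fderiv ℝ g) z v (Pi.single j I)) := by
  unfold wirtingerDeriv
  rw [fderiv_const_mul (by fun_prop), fderiv_fun_sub (by fun_prop) (by fun_prop),
    fderiv_const_mul (by fun_prop)]
  simp [fderiv_fderiv_apply hg]

theorem wirtingerDeriv_wirtingerDerivBar_comm (hg : ContDiffAt ℝ 2 g z) (j k : Fin m) :
    wirtingerDeriv (wirtingerDerivBar g k) j z = wirtingerDerivBar (wirtingerDeriv g j) k z := by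
  have hd := hg.differentiableAt_fderiv
  have hsymm := hg.isSymmSndFDerivAt (by simp [minSmoothness_of_isRCLikeNormedField])
  simp only [wirtingerDeriv, wirtingerDerivBar, fderiv_wirtingerDerivBar_apply hd,
    fderiv_wirtingerDeriv_apply hd]
  linear_combination (1/4 : ℂ) * hsymm (Pi.single j 1) (Pi.single k 1)
    + (I/4) * hsymm (Pi.single j 1) (Pi.single k I)
    - (I/4) * hsymm (Pi.single j I) (Pi.single k 1)
    - (I ^ 2 / 4) * hsymm (Pi.single j I) (Pi.single k I)

theorem wirtingerDeriv_mul (hg : DifferentiableAt ℝ g z) (hh : DifferentiableAt ℝ h z)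
    (j : Fin m) :
    wirtingerDeriv (fun w => g w * h w) j z
      = g z * wirtingerDeriv h j z + h z * wirtingerDeriv g j z := by
  simp only [wirtingerDeriv, fderiv_fun_mul hg hh, _root_.add_apply,
    _root_.smul_apply, smul_eq_mul]
  ring

theorem wirtingerDeriv_sub (hg : DifferentiableAt ℝ g z) (hh : DifferentiableAt ℝ h z)
    (j : Fin m) :
    wirtingerDeriv (fun w => g w - h w) j z = wirtingerDeriv g j z - wirtingerDeriv h j z := by
  simp only [wirtingerDeriv, fderiv_fun_sub hg hh, _root_.sub_apply]
  ring

theorem ContDiffAt.differentiableAt_wirtingerDerivBar (hg : ContDiffAt ℝ 2 g z) (j : Fin m) :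
    DifferentiableAt ℝ (wirtingerDerivBar g j) z := by
  have := hg.differentiableAt_fderiv
  unfold wirtingerDerivBar
  fun_prop

theorem conj_wirtingerDerivBar_of_real (hreal : ∀ w, conj (g w) = g w) (j : Fin m)
    (z : Fin m → ℂ) : conj (wirtingerDerivBar g j z) = wirtingerDeriv g j z := by
  rw [← wirtingerDeriv_conj]
  simp only [hreal]

noncomputable def complexHessian (g : (Fin m → ℂ) → ℂ) (z : Fin m → ℂ) :
    Matrix (Fin m) (Fin m) ℂ :=
  Matrix.of fun j k => wirtingerDeriv (wirtingerDerivBar g k) j z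

theorem isHermitian_complexHessian (hreal : ∀ w, conj (g w) = g w) (hg : ContDiffAt ℝ 2 g z) :
    (complexHessian g z).IsHermitian := by
  ext j k
  simp only [conjTranspose_apply, complexHessian, of_apply, RCLike.star_def]
  rw [← wirtingerDerivBar_conj]
  simp only [conj_wirtingerDerivBar_of_real hreal]
  exact (wirtingerDeriv_wirtingerDerivBar_comm hg j k).symm

/-- `cauchyRiemannBar g j k f` is `X_{j̄ k̄} f = g_{k̄} ∂_{j̄} f - g_{j̄} ∂_{k̄} f`. -/
noncomputable def cauchyRiemannBar (g : (Fin m → ℂ) → ℂ) (j k : Fin m)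
    (f : (Fin m → ℂ) → ℂ) : (Fin m → ℂ) → ℂ := fun w =>
  wirtingerDerivBar g k w * wirtingerDerivBar f j w
    - wirtingerDerivBar g j w * wirtingerDerivBar f k w

theorem wirtingerDeriv_cauchyRiemannBar (hg : ContDiffAt ℝ 2 g z) (hf : ContDiffAt ℝ 2 f z)
    (j k p : Fin m) :
    wirtingerDeriv (cauchyRiemannBar g j k f) p z
      = complexHessian g z p k * wirtingerDerivBar f j z
          + wirtingerDerivBar g k z * wirtingerDeriv (wirtingerDerivBar f j) p z
        - (complexHessian g z p j * wirtingerDerivBar f k z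
          + wirtingerDerivBar g j z * wirtingerDeriv (wirtingerDerivBar f k) p z) := by
  have dg := hg.differentiableAt_wirtingerDerivBar
  have df := hf.differentiableAt_wirtingerDerivBar
  unfold cauchyRiemannBar
  simp only [complexHessian, of_apply]
  rw [wirtingerDeriv_sub ((dg k).fun_mul (df j)) ((dg j).fun_mul (df k)),
    wirtingerDeriv_mul (dg k) (df j), wirtingerDeriv_mul (dg j) (df k)]
  ring

end Wirtinger

section Contraction

variable {ι R : Type*} [Fintype ι] [CommRing R]

theorem sum_contract_antisymm (G : Matrix ι ι R) (a : ι → R) (T : ι → ι → ι → R)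
    (hT : ∀ j k p, T k j p = -T j k p) :
    ∑ p, ∑ q, ∑ j, ∑ k, G k p * G j q * (a q * T j k p - a p * T j k q)
      = 2 * ∑ p, ∑ j, ∑ k, G k p * (G *ᵥ a) j * T j k p := by
  have hswap : ∑ p, ∑ q, ∑ j, ∑ k, G k p * G j q * (a p * T j k q)
      = -∑ p, ∑ q, ∑ j, ∑ k, G k p * G j q * (a q * T j k p) := by
    rw [Finset.sum_comm]
    simp only [← Finset.sum_neg_distrib]
    refine Finset.sum_congr rfl fun p _ => Finset.sum_congr rfl fun q _ => ?_
    rw [Finset.sum_comm]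
    refine Finset.sum_congr rfl fun j _ => Finset.sum_congr rfl fun k _ => ?_
    rw [hT]
    ring
  have hcontract : ∑ p, ∑ q, ∑ j, ∑ k, G k p * G j q * (a q * T j k p)
      = ∑ p, ∑ j, ∑ k, G k p * (G *ᵥ a) j * T j k p := by
    refine Finset.sum_congr rfl fun p _ => ?_
    rw [Finset.sum_comm]
    refine Finset.sum_congr rfl fun j _ => ?_
    rw [Finset.sum_comm]
    refine Finset.sum_congr rfl fun k _ => ?_
    simp only [mulVec, dotProduct, Finset.mul_sum, Finset.sum_mul]
    exact Finset.sum_congr rfl fun q _ => by ring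
  simp only [mul_sub, Finset.sum_sub_distrib, hswap, hcontract]
  ring

variable [DecidableEq ι]

theorem sum_contract_leibniz (G H : Matrix ι ι R) (hGH : G * H = 1) (A : ι → ι → R)
    (b c F : ι → R) :
    ∑ p, ∑ j, ∑ k, G k p * c j * (H p k * F j + b k * A p j - (H p j * F k + b j * A p k))
      = (Fintype.card ι - 1) * ∑ j, c j * F j
        + ∑ j, ∑ k, ((b ᵥ* G) k * c j - (b ⬝ᵥ c) * G j k) * A k j := by
  have hδ : ∀ k j, ∑ p, G k p * H p j = if k = j then 1 else 0 := fun k j => by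
    simpa [Matrix.mul_apply, Matrix.one_apply] using congrFun (congrFun hGH k) j
  have h1 : ∑ p, ∑ j, ∑ k, G k p * c j * (H p k * F j)
      = Fintype.card ι * ∑ j, c j * F j := by
    calc _ = ∑ j, ∑ k, (∑ p, G k p * H p k) * (c j * F j) := by
          rw [Finset.sum_comm]
          refine Finset.sum_congr rfl fun j _ => ?_
          rw [Finset.sum_comm]
          refine Finset.sum_congr rfl fun k _ => ?_
          rw [Finset.sum_mul]
          exact Finset.sum_congr rfl fun p _ => by ring
      _ = _ := by simp [hδ, Finset.mul_sum]
  have h2 : ∑ p, ∑ j, ∑ k, G k p * c j * (b k * A p j)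
      = ∑ j, ∑ k, (b ᵥ* G) k * c j * A k j := by
    rw [Finset.sum_comm]
    refine Finset.sum_congr rfl fun j _ => Finset.sum_congr rfl fun p _ => ?_
    simp only [vecMul, dotProduct, Finset.sum_mul]
    exact Finset.sum_congr rfl fun k _ => by ring
  have h3 : ∑ p, ∑ j, ∑ k, G k p * c j * (H p j * F k) = ∑ j, c j * F j := by
    calc _ = ∑ j, ∑ k, (∑ p, G k p * H p j) * (c j * F k) := by
          rw [Finset.sum_comm]
          refine Finset.sum_congr rfl fun j _ => ?_
          rw [Finset.sum_comm]
          refine Finset.sum_congr rfl fun k _ => ?_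
          rw [Finset.sum_mul]
          exact Finset.sum_congr rfl fun p _ => by ring
      _ = _ := by simp [hδ]
  have h4 : ∑ p, ∑ j, ∑ k, G k p * c j * (b j * A p k)
      = ∑ j, ∑ k, (b ⬝ᵥ c) * G j k * A k j := by
    simp only [dotProduct, Finset.sum_mul]
    rw [← Finset.sum_congr rfl fun p _ => Finset.sum_comm, Finset.sum_comm]
    exact Finset.sum_congr rfl fun k _ => Finset.sum_congr rfl fun p _ =>
      Finset.sum_congr rfl fun j _ => by ring
  simp only [mul_add, mul_sub, Finset.sum_add_distrib, Finset.sum_sub_distrib, h1, h2, h3, h4,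
    sub_mul]
  ring

end Contraction

theorem kohn_laplacian_contraction_identity_general
    {n : ℕ} (U : Set (Fin (n+1) → ℂ)) (hU : IsOpen U)
    (ρ : (Fin (n+1) → ℂ) → ℝ) (f : (Fin (n+1) → ℂ) → ℂ)
    (hρC2 : ContDiffOn ℝ 2 ρ U) (hfC2 : ContDiffOn ℝ 2 f U)
    (ρC : (Fin (n+1) → ℂ) → ℂ) (hρC : ∀ w, ρC w = ((ρ w : ℝ) : ℂ))
    (z : Fin (n+1) → ℂ) (hz : z ∈ U)
    (Hm : Matrix (Fin (n+1)) (Fin (n+1)) ℂ)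
    (hHm : ∀ j k, Hm j k = wirtingerDeriv (fun w => wirtingerDerivBar ρC k w) j z)
    (hHinv : IsUnit Hm.det)
    (G : Matrix (Fin (n+1)) (Fin (n+1)) ℂ) (hG : G = Hm⁻¹)
    (ρup : Fin (n+1) → Fin (n+1) → ℂ) (hρup : ∀ j k, ρup j k = G k j)
    (ρv : Fin (n+1) → ℂ)
    (hρv : ∀ j, ρv j = ∑ k, wirtingerDerivBar ρC k z * ρup j k)
    (nr : ℂ)
    (hnr : nr = ∑ j, ∑ k, ρup j k * wirtingerDeriv ρC j z * wirtingerDerivBar ρC k z)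
    (XB : Fin (n+1) → Fin (n+1) → (Fin (n+1) → ℂ) → ℂ)
    (hXB : ∀ j k w, XB j k w
      = wirtingerDerivBar ρC k w * wirtingerDerivBar f j w
        - wirtingerDerivBar ρC j w * wirtingerDerivBar f k w) :
    ∑ p, ∑ q, ∑ j, ∑ k, ρup p k * ρup q j *
        (wirtingerDeriv ρC q z * wirtingerDeriv (XB j k) p z
          - wirtingerDeriv ρC p z * wirtingerDeriv (XB j k) q z)
      = 2 * ∑ j, ∑ k, (ρv k * (starRingEnd ℂ) (ρv j) - nr * ρup k j) *
            wirtingerDeriv (fun w => wirtingerDerivBar f j w) k z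
        + 2 * n * ∑ j, (starRingEnd ℂ) (ρv j) * wirtingerDerivBar f j z := by
  have hreal : ∀ w, conj (ρC w) = ρC w := fun w => by simp [hρC]
  have hρ : ContDiffAt ℝ 2 ρC z := by
    rw [show ρC = fun w => (ρ w : ℂ) from funext hρC]
    exact ofRealCLM.contDiff.contDiffAt.comp z (hρC2.contDiffAt (hU.mem_nhds hz))
  have hf : ContDiffAt ℝ 2 f z := hfC2.contDiffAt (hU.mem_nhds hz)
  have hHess : Hm = complexHessian ρC z := Matrix.ext hHm
  have hGherm : G.IsHermitian := hG ▸ hHess ▸ (isHermitian_complexHessian hreal hρ).inv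
  set a := fun q => wirtingerDeriv ρC q z
  set b := fun k => wirtingerDerivBar ρC k z
  have hρv' : ρv = b ᵥ* G := funext fun j => by simp [hρv, hρup, vecMul, dotProduct, b]
  have hconj : ∀ j, conj (ρv j) = (G *ᵥ a) j := fun j => by
    have hGconj : ∀ k, conj (G k j) = G j k := fun k => hGherm.apply j k
    simp only [hρv', vecMul, dotProduct, mulVec, map_sum, map_mul, hGconj, b,
      conj_wirtingerDerivBar_of_real hreal]
    exact Finset.sum_congr rfl fun k _ => mul_comm _ _
  have hnr' : nr = b ⬝ᵥ (G *ᵥ a) := by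
    rw [hnr, Finset.sum_comm]
    simp only [dotProduct, mulVec, Finset.mul_sum, hρup]
    exact Finset.sum_congr rfl fun k _ => Finset.sum_congr rfl fun j _ => by ring
  have hXB' : XB = fun j k => cauchyRiemannBar ρC j k f := by
    ext j k w; exact hXB j k w
  simp only [hρup, hXB', wirtingerDeriv_cauchyRiemannBar hρ hf, hconj, hnr', ← hHess]
  rw [sum_contract_antisymm G a _ (fun j k p => by ring),
    sum_contract_leibniz G Hm (hG ▸ nonsing_inv_mul Hm hHinv)
      (fun p j => wirtingerDeriv (wirtingerDerivBar f j) p z) b, ← hρv']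
  simp only [Fintype.card_fin, Nat.cast_add, Nat.cast_one, add_sub_cancel_right]
  ring

/-- The contraction identity in Proposition 2.1 of Li–Lin–Son relating
the two local expressions for the Kohn-Laplacian: for `ρ : U → ℝ` and `f : U → ℂ` of
class `C²` on an open set `U ⊆ ℂ^{n+1}`, at a point `z ∈ U` where the complex Hessian
`H = [ρ_{j k̄}]` is invertible and `|∂ρ|_ρ² ≠ 0`,
`Σ_{p,q,j,k} ρ^{p k̄} ρ^{q j̄} X_{pq}(X_{j̄ k̄} f)
  = 2 Σ_{j,k} (ρ^k ρ^{j̄} - |∂ρ|_ρ² ρ^{k j̄}) ∂_k ∂_{j̄} f + 2n Σ_j ρ^{j̄} ∂_{j̄} f`,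
where `X_{pq} g = ρ_q ∂_p g - ρ_p ∂_q g` and `X_{j̄ k̄} g = ρ_{k̄} ∂_{j̄} g - ρ_{j̄} ∂_{k̄} g`. -/
theorem kohn_laplacian_contraction_identity
    {n : ℕ} (U : Set (Fin (n+1) → ℂ)) (hU : IsOpen U)
    (ρ : (Fin (n+1) → ℂ) → ℝ) (f : (Fin (n+1) → ℂ) → ℂ)
    (hρC2 : ContDiffOn ℝ 2 ρ U) (hfC2 : ContDiffOn ℝ 2 f U)
    (ρC : (Fin (n+1) → ℂ) → ℂ) (hρC : ∀ w, ρC w = ((ρ w : ℝ) : ℂ))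
    (z : Fin (n+1) → ℂ) (hz : z ∈ U)
    (Hm : Matrix (Fin (n+1)) (Fin (n+1)) ℂ)
    (hHm : ∀ j k, Hm j k = wirtingerDeriv (fun w => wirtingerDerivBar ρC k w) j z)
    (hHinv : IsUnit Hm.det)
    (G : Matrix (Fin (n+1)) (Fin (n+1)) ℂ) (hG : G = Hm⁻¹)
    (ρup : Fin (n+1) → Fin (n+1) → ℂ) (hρup : ∀ j k, ρup j k = G k j)
    (ρv : Fin (n+1) → ℂ)
    (hρv : ∀ j, ρv j = ∑ k, wirtingerDerivBar ρC k z * ρup j k)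
    (nr : ℂ)
    (hnr : nr = ∑ j, ∑ k, ρup j k * wirtingerDeriv ρC j z * wirtingerDerivBar ρC k z)
    (hnr0 : nr ≠ 0)
    (XB : Fin (n+1) → Fin (n+1) → (Fin (n+1) → ℂ) → ℂ)
    (hXB : ∀ j k w, XB j k w
      = wirtingerDerivBar ρC k w * wirtingerDerivBar f j w
        - wirtingerDerivBar ρC j w * wirtingerDerivBar f k w) :
    ∑ p, ∑ q, ∑ j, ∑ k, ρup p k * ρup q j *
        (wirtingerDeriv ρC q z * wirtingerDeriv (XB j k) p z
          - wirtingerDeriv ρC p z * wirtingerDeriv (XB j k) q z)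
      = 2 * ∑ j, ∑ k, (ρv k * (starRingEnd ℂ) (ρv j) - nr * ρup k j) *
            wirtingerDeriv (fun w => wirtingerDerivBar f j w) k z
        + 2 * n * ∑ j, (starRingEnd ℂ) (ρv j) * wirtingerDerivBar f j z :=
  kohn_laplacian_contraction_identity_general U hU ρ f hρC2 hfC2 ρC hρC z hz Hm hHm hHinv G hG ρup
    hρup ρv hρv nr hnr XB hXB
end

section
/- Let n ≥ 0, let ν > 0, and let A : {1, …, n+1} → ℝ satisfy 0 ≤ A_j < 1 for all j. Define ρ(z) = Σ_{j=1}^{n+1} |z_j|^2 + Σ_{j=1}^{n+1} A_j · Re(z_j^2) and M_ν = { z ∈ ℂ^{n+1} : ρ(z) = ν }. If there exists a constant c ∈ ℝ such that Σ_{j=1}^{n+1} | conj(z_j) + A_j z_j |^2 = c for every z ∈ M_ν, then A_j = 0 for all j; that is, M_ν is the sphere { z : ‖z‖^2 = ν } of radius √ν centered at 0. -/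
/-!
On the complex line through a coordinate axis `e_j`, `ρ` restricts to `|w|² + a Re(w²)` and
`|∂ρ|²` to `|w̄ + a w|²` (with `a = A_j`). On the real line the latter equals `(1 + a) ρ`, on
the imaginary line `(1 - a) ρ`; both lines meet `M_ν` because `|a| < 1`. So constancy on `M_ν`
forces `(1 + a) ν = (1 - a) ν`, i.e. `a = 0`.
-/

open Complex ComplexConjugate

lemma Fintype.sum_apply_single {ι β M : Type*} [Fintype ι] [DecidableEq ι] [Zero β]
    [AddCommMonoid M] (f : ι → β → M) (hf : ∀ i, f i 0 = 0) (j : ι) (b : β) :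
    ∑ i, f i ((Pi.single j b : ι → β) i) = f j b := by
  simp_rw [Pi.apply_single f hf, Fintype.sum_pi_single']

lemma exists_sq_mul_eq {b ν : ℝ} (hb : 0 < b) (hν : 0 ≤ ν) : ∃ t : ℝ, t ^ 2 * b = ν :=
  ⟨√(ν / b), by rw [Real.sq_sqrt (by positivity), div_mul_cancel₀ _ hb.ne']⟩

section OneVariable

lemma normSq_conj_add_mul_of_im_eq_zero {w : ℂ} (hw : w.im = 0) (a : ℝ) :
    normSq (conj w + a * w) = (1 + a) * (normSq w + a * (w ^ 2).re) := by
  simp only [normSq_apply, pow_two, add_re, add_im, conj_re, conj_im, mul_re, mul_im, ofReal_re,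
    ofReal_im, hw]
  ring

lemma normSq_conj_add_mul_of_re_eq_zero {w : ℂ} (hw : w.re = 0) (a : ℝ) :
    normSq (conj w + a * w) = (1 - a) * (normSq w + a * (w ^ 2).re) := by
  simp only [normSq_apply, pow_two, add_re, add_im, conj_re, conj_im, mul_re, mul_im, ofReal_re,
    ofReal_im, hw]
  ring

variable {a ν : ℝ}

lemma exists_im_eq_zero_and_normSq_add_mul_re_sq_eq (ha : -1 < a) (hν : 0 ≤ ν) :
    ∃ w : ℂ, w.im = 0 ∧ normSq w + a * (w ^ 2).re = ν := by
  obtain ⟨t, ht⟩ := exists_sq_mul_eq (by linarith : 0 < 1 + a) hν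
  refine ⟨t, ofReal_im t, ?_⟩
  rw [← ht, normSq_ofReal, ← ofReal_pow, ofReal_re]
  ring

lemma exists_re_eq_zero_and_normSq_add_mul_re_sq_eq (ha : a < 1) (hν : 0 ≤ ν) :
    ∃ w : ℂ, w.re = 0 ∧ normSq w + a * (w ^ 2).re = ν := by
  obtain ⟨t, ht⟩ := exists_sq_mul_eq (by linarith : 0 < 1 - a) hν
  refine ⟨t * I, by simp, ?_⟩
  rw [← ht]
  simp only [normSq_apply, pow_two, mul_re, mul_im, ofReal_re, ofReal_im, I_re, I_im]
  ring

theorem eq_zero_of_normSq_conj_add_mul_const_on_level {c : ℝ} (ha₀ : -1 < a) (ha₁ : a < 1)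
    (hν : 0 < ν) (hc : ∀ w : ℂ, normSq w + a * (w ^ 2).re = ν → normSq (conj w + a * w) = c) :
    a = 0 := by
  obtain ⟨x, hx, hxν⟩ := exists_im_eq_zero_and_normSq_add_mul_re_sq_eq ha₀ hν.le
  obtain ⟨y, hy, hyν⟩ := exists_re_eq_zero_and_normSq_add_mul_re_sq_eq ha₁ hν.le
  have hc_real : (1 + a) * ν = c := by
    rw [← hxν, ← normSq_conj_add_mul_of_im_eq_zero hx, hc x hxν]
  have hc_imag : (1 - a) * ν = c := by
    rw [← hyν, ← normSq_conj_add_mul_of_re_eq_zero hy, hc y hyν]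
  have : a * ν = 0 := by linarith
  exact (mul_eq_zero.1 this).resolve_right hν.ne'

end OneVariable

/-- The rigidity step concluding the proof of Corollary 1.3 of
Li–Lin–Son: for the diagonalized real ellipsoid `ρ(z) = Σ_j |z_j|² + Σ_j A_j Re(z_j²)`
with `0 ≤ A_j < 1` and `ν > 0`, if `Σ_j |conj(z_j) + A_j z_j|²` (which is `|∂ρ|_ρ²`)
is constant along the level set `M_ν = {z : ρ(z) = ν}`, then `A_j = 0` for all `j`,
that is, `M_ν` is the sphere `{z : ‖z‖² = ν}` of radius `√ν` centered at `0`. -/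
theorem ellipsoid_constant_gradient_rigidity
    {n : ℕ} (ν : ℝ) (hν : 0 < ν)
    (A : Fin (n+1) → ℝ) (hA0 : ∀ j, 0 ≤ A j) (hA1 : ∀ j, A j < 1)
    (ρ : (Fin (n+1) → ℂ) → ℝ)
    (hρ : ∀ z, ρ z = ∑ j, Complex.normSq (z j) + ∑ j, A j * ((z j)^2).re)
    (c : ℝ)
    (hc : ∀ z : Fin (n+1) → ℂ, ρ z = ν →
        ∑ j, Complex.normSq ((starRingEnd ℂ) (z j) + (A j : ℂ) * z j) = c) :
    (∀ j, A j = 0)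
    ∧ {z : Fin (n+1) → ℂ | ρ z = ν} = {z : Fin (n+1) → ℂ | ∑ j, Complex.normSq (z j) = ν} := by
  have hρ_single (j : Fin (n + 1)) (w : ℂ) :
      ρ (Pi.single j w) = normSq w + A j * (w ^ 2).re := by
    rw [hρ, Fintype.sum_apply_single (fun _ ↦ normSq) (by simp),
      Fintype.sum_apply_single (fun k (w : ℂ) ↦ A k * (w ^ 2).re) (by simp)]
  have hc_single (j : Fin (n + 1)) (w : ℂ) (hw : normSq w + A j * (w ^ 2).re = ν) :
      normSq (conj w + A j * w) = c := by
    rw [← hc (Pi.single j w) (by rw [hρ_single, hw]),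
      Fintype.sum_apply_single (fun k (w : ℂ) ↦ normSq (conj w + A k * w)) (by simp)]
  have hA (j : Fin (n + 1)) : A j = 0 :=
    eq_zero_of_normSq_conj_add_mul_const_on_level (by linarith [hA0 j]) (hA1 j) hν
      (hc_single j)
  refine ⟨hA, ?_⟩
  ext z
  simp [hρ, hA]
end
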